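/- Let λ be a real number. For every integer n ≥ 1 and every real x, the degenerate Bernoulli polynomial satisfies β_{n,λ}(x) = (x+1)_{n,λ} - M_{n+1,λ}/(n+1) + Σ_{k=2}^{n} (-1)^k k! · B_{n,k}(β_{1,λ}(x), β_{2,λ}(x), …, β_{n-k+1,λ}(x)) + Σ_{j=1}^{n-1} Σ_{k=1}^{j} C(n,j) (x+1)_{n-j,λ} (-1)^k k! · B_{j,k}(β_{1,λ}(x), β_{2,λ}(x), …, β_{j-k+1,λ}(x)), where M_{m,λ} = (2)_{m,λ} - (1)_{m,λ} are the dimorphic Mersenne numbers and B_{j,k} denotes the incomplete Bell polynomial. -/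

import Mathlib

/-- The degenerate falling factorial `(x)_{n,λ} = x (x - λ) (x - 2λ) ⋯ (x - (n-1)λ)`,
with `(x)_{0,λ} = 1`. -/
def degFallingFactorial (lam x : ℝ) (n : ℕ) : ℝ :=
  ∏ i ∈ Finset.range n, (x - i * lam)

/-- The degenerate exponential `e_λ^x(t) = ∑_{n=0}^∞ (x)_{n,λ} t^n/n!` as a formal
power series in `ℝ[[t]]`. -/
noncomputable def degExpSeries (lam x : ℝ) : PowerSeries ℝ :=
  PowerSeries.mk fun n => degFallingFactorial lam x n / (n.factorial : ℝ)

/-- The formal power series `(e_λ(t) - 1)/t`, whose constant term is `1`. -/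
noncomputable def degExpSubOneDivT (lam : ℝ) : PowerSeries ℝ :=
  PowerSeries.mk fun n => degFallingFactorial lam 1 (n + 1) / ((n + 1).factorial : ℝ)

/-- The generating series `(t/(e_λ(t)-1)) ⬝ e_λ^x(t) = ∑_{n=0}^∞ β_{n,λ}(x) t^n/n!` of the
degenerate Bernoulli polynomials, where `t/(e_λ(t)-1)` denotes the multiplicative inverse
of the series `(e_λ(t)-1)/t`. -/
noncomputable def degBernoulliSeries (lam x : ℝ) : PowerSeries ℝ :=
  (degExpSubOneDivT lam)⁻¹ * degExpSeries lam x

/-- The degenerate Bernoulli polynomial `β_{n,λ}(x)`, read off from its generating series. -/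
noncomputable def degBernoulli (lam x : ℝ) (n : ℕ) : ℝ :=
  (n.factorial : ℝ) * PowerSeries.coeff n (degBernoulliSeries lam x)

/-- The dimorphic Mersenne number `M_{n,λ} = (2)_{n,λ} - (1)_{n,λ}`. -/
def dimorphicMersenne (lam : ℝ) (n : ℕ) : ℝ :=
  degFallingFactorial lam 2 n - degFallingFactorial lam 1 n

/-- The incomplete Bell polynomial `B_{n,k}(x_1, …, x_{n-k+1})`: the sum over all tuples of
nonnegative integers `l_1, …, l_{n-k+1}` with `l_1 + ⋯ + l_{n-k+1} = k` and
`l_1 + 2 l_2 + ⋯ + (n-k+1) l_{n-k+1} = n` of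
`(n!/(l_1! ⋯ l_{n-k+1}!)) (x_1/1!)^{l_1} ⋯ (x_{n-k+1}/(n-k+1)!)^{l_{n-k+1}}`.
The arguments are given by `x : ℕ → ℝ`, with `x i` playing the role of `x_i`. -/
noncomputable def incompleteBell (n k : ℕ) (x : ℕ → ℝ) : ℝ :=
  ∑ l ∈ (Fintype.piFinset fun _ : Fin (n - k + 1) => Finset.range (n + 1)).filter
      (fun l => (∑ i, l i) = k ∧ (∑ i, (i.1 + 1) * l i) = n),
    ((n.factorial : ℝ) / ∏ i, ((l i).factorial : ℝ)) *
      ∏ i, (x (i.1 + 1) / ((i.1 + 1).factorial : ℝ)) ^ l i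

/-! With `B = t/(e_λ(t) - 1) ⬝ e_λ^x(t)`, the product `B⁻¹ ⬝ e_λ^{x+1}(t)` collapses to
`(e_λ(t) - 1) e_λ(t) / t = (e_λ^2(t) - e_λ(t)) / t`, whose `n`-th exponential coefficient is
`M_{n+1,λ}/(n+1)`. On the other hand `B = 1 + g` with `g(0) = 0`, so `B⁻¹ = ∑ₖ (-g)^k`, and
`g^k/k!` is the exponential generating function of `B_{j,k}(β_{1,λ}(x), β_{2,λ}(x), …)`; hence the
`j`-th exponential coefficient of `B⁻¹` is `∑ₖ (-1)^k k! B_{j,k}`. Expanding the product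
binomially and isolating the terms `j = 0` and `j = n` (where `B_{n,1} = β_{n,λ}(x)`) gives the
formula. -/

open Finset PowerSeries

lemma degFallingFactorial_zero (lam x : ℝ) : degFallingFactorial lam x 0 = 1 :=
  prod_range_zero _

lemma degFallingFactorial_succ (lam x : ℝ) (n : ℕ) :
    degFallingFactorial lam x (n + 1) = degFallingFactorial lam x n * (x - n * lam) :=
  prod_range_succ _ _

lemma degFallingFactorial_zero_left (lam : ℝ) {n : ℕ} (hn : n ≠ 0) :
    degFallingFactorial lam 0 n = 0 :=
  prod_eq_zero (i := 0) (by simpa [Nat.pos_iff_ne_zero]) (by simp)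

theorem degFallingFactorial_add (lam x y : ℝ) (n : ℕ) :
    degFallingFactorial lam (x + y) n =
      ∑ ij ∈ antidiagonal n, (n.choose ij.1 : ℝ) *
        (degFallingFactorial lam x ij.1 * degFallingFactorial lam y ij.2) := by
  induction n with
  | zero => simp [degFallingFactorial_zero]
  | succ n ih =>
    rw [sum_antidiagonal_choose_succ_mul
        (fun i j => degFallingFactorial lam x i * degFallingFactorial lam y j),
      degFallingFactorial_succ, ih, sum_mul, ← sum_add_distrib]
    refine sum_congr rfl fun ij hij => ?_
    rw [HasAntidiagonal.mem_antidiagonal] at hij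
    have hn : (n : ℝ) = ij.1 + ij.2 := by exact_mod_cast hij.symm
    rw [← Nat.choose_symm_of_eq_add hij.symm, degFallingFactorial_succ,
      degFallingFactorial_succ, hn]
    ring

theorem factorial_mul_coeff_mul {R : Type*} [CommSemiring R] (f g : R⟦X⟧) (n : ℕ) :
    (n.factorial : R) * coeff n (f * g) =
      ∑ ij ∈ antidiagonal n, (n.choose ij.1 : R) *
        ((ij.1.factorial * coeff ij.1 f) * (ij.2.factorial * coeff ij.2 g)) := by
  rw [coeff_mul, mul_sum]
  refine sum_congr rfl fun ij hij => ?_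
  obtain rfl := HasAntidiagonal.mem_antidiagonal.mp hij
  rw [← Nat.add_choose_mul_factorial_mul_factorial, Nat.choose_symm_add]
  push_cast
  ring

theorem coeff_pow_eq_of_X_pow_dvd_sub {R : Type*} [CommRing R] {f g : R⟦X⟧}
    (hf : X ∣ f) (hg : X ∣ g) {n k : ℕ} (hfg : X ^ (n - k + 2) ∣ f - g) :
    coeff n (f ^ k) = coeff n (g ^ k) := by
  rcases Nat.eq_zero_or_pos k with rfl | hk
  · rfl
  have hgeom : X ^ (k - 1) ∣ ∑ i ∈ range k, f ^ i * g ^ (k - 1 - i) :=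
    dvd_sum fun i hi => by
      have h := mul_dvd_mul (pow_dvd_pow_of_dvd hf i) (pow_dvd_pow_of_dvd hg (k - 1 - i))
      rwa [← pow_add, Nat.add_sub_cancel' (by grind)] at h
  have hdvd : X ^ (n + 1) ∣ f ^ k - g ^ k := by
    rw [← geom_sum₂_mul]
    exact (pow_dvd_pow X (show n + 1 ≤ (k - 1) + (n - k + 2) by omega)).trans
      (pow_add (X : R⟦X⟧) _ _ ▸ mul_dvd_mul hgeom hfg)
  rw [← sub_eq_zero, ← map_sub]
  exact X_pow_dvd_iff.mp hdvd n n.lt_succ_self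

theorem coeff_sum_C_mul_X_pow_pow {R : Type*} [CommRing R] {N : ℕ} (c : Fin N → R) (n k : ℕ) :
    coeff n ((∑ i, C (c i) * X ^ (i.1 + 1)) ^ k) =
      ∑ l ∈ (piAntidiag univ k).filter (fun l => ∑ i, (i.1 + 1) * l i = n),
        (Nat.multinomial univ l : R) * ∏ i, c i ^ l i := by
  rw [sum_pow_eq_sum_piAntidiag, map_sum, sum_filter]
  refine sum_congr rfl fun l _ => ?_
  have hprod : ∏ i, (C (c i) * X ^ (i.1 + 1)) ^ l i =
      C (∏ i, c i ^ l i) * X ^ (∑ i, (i.1 + 1) * l i) := by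
    simp only [mul_pow, prod_mul_distrib, map_prod, map_pow, ← pow_mul, prod_pow_eq_pow_sum]
  rw [hprod, ← map_natCast (C (R := R)), ← mul_assoc, ← map_mul, coeff_C_mul_X_pow]
  simp only [eq_comm (a := n)]

theorem factorial_mul_coeff_pow_eq_incompleteBell {g : ℝ⟦X⟧} {a : ℕ → ℝ}
    (hg0 : constantCoeff g = 0) (hg : ∀ m, 0 < m → coeff m g = a m / m.factorial) (n k : ℕ) :
    (n.factorial : ℝ) * coeff n (g ^ k) = k.factorial * incompleteBell n k a := by
  classical
  -- `[tⁿ] g^k` only sees the coefficients of `g` up to degree `n - k + 1`; truncating `g` there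
  -- leaves a polynomial whose multinomial expansion is the sum defining `B_{n,k}`.
  set c : Fin (n - k + 1) → ℝ := fun i => a (i.1 + 1) / (i.1 + 1).factorial
  have hcoeff (m : ℕ) : coeff m (∑ i, C (c i) * X ^ (i.1 + 1)) =
      if 0 < m ∧ m ≤ n - k + 1 then a m / m.factorial else 0 := by
    simp only [map_sum, coeff_C_mul_X_pow]
    split_ifs with hm
    · rw [Fintype.sum_eq_single ⟨m - 1, by omega⟩ fun i hi => if_neg (by grind)]
      simp [c, Nat.sub_add_cancel hm.1]
    · exact sum_eq_zero fun i _ => if_neg (by omega)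
  have htrunc : coeff n (g ^ k) = coeff n ((∑ i, C (c i) * X ^ (i.1 + 1)) ^ k) := by
    refine coeff_pow_eq_of_X_pow_dvd_sub (X_dvd_iff.mpr hg0) ?_ (X_pow_dvd_iff.mpr ?_)
    · exact dvd_sum fun i _ => (dvd_pow_self X i.1.succ_ne_zero).mul_left _
    · intro m hm
      rcases Nat.eq_zero_or_pos m with rfl | hm0
      · simp [hg0]
      · rw [map_sub, hcoeff, if_pos ⟨hm0, by omega⟩, hg m hm0, sub_self]
  have hsupport : (piAntidiag univ k).filter (fun l => ∑ i, (i.1 + 1) * l i = n) =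
      (Fintype.piFinset fun _ : Fin (n - k + 1) => range (n + 1)).filter
        (fun l => (∑ i, l i) = k ∧ (∑ i, (i.1 + 1) * l i) = n) := by
    ext l
    simp only [mem_filter, mem_piAntidiag, Fintype.mem_piFinset, mem_range, mem_univ,
      implies_true, and_true]
    refine ⟨fun ⟨hk, hn⟩ => ⟨fun i => ?_, hk, hn⟩, fun ⟨_, h⟩ => h⟩
    calc l i ≤ (i.1 + 1) * l i := Nat.le_mul_of_pos_left _ i.1.succ_pos
      _ ≤ ∑ j, (j.1 + 1) * l j :=
        single_le_sum (f := fun j => (j.1 + 1) * l j) (fun j _ => Nat.zero_le _) (mem_univ i)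
      _ < n + 1 := by omega
  rw [htrunc, coeff_sum_C_mul_X_pow_pow, hsupport, incompleteBell, mul_sum, mul_sum]
  refine sum_congr rfl fun l hl => ?_
  have hmult : (∏ i, ((l i).factorial : ℝ)) * Nat.multinomial univ l = k.factorial := by
    have hspec := Nat.multinomial_spec univ l
    rw [(mem_filter.mp hl).2.1] at hspec
    exact_mod_cast hspec
  have hprod : (∏ i, ((l i).factorial : ℝ)) ≠ 0 := prod_ne_zero_iff.mpr fun i _ => by positivity
  rw [← hmult]
  simp only [c]
  field_simp

lemma incompleteBell_one (a : ℕ → ℝ) {n : ℕ} (hn : 0 < n) : incompleteBell n 1 a = a n := by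
  have hbell := factorial_mul_coeff_pow_eq_incompleteBell (a := a)
    (g := mk fun m => if m = 0 then 0 else a m / m.factorial)
    (by simp [← coeff_zero_eq_constantCoeff_apply]) (fun m hm => by simp [hm.ne']) n 1
  rw [pow_one, coeff_mk, if_neg hn.ne', mul_div_cancel₀ _ (by positivity)] at hbell
  simpa using hbell.symm

theorem coeff_inv_one_add {K : Type*} [Field K] {g : K⟦X⟧} (hg : constantCoeff g = 0) (j : ℕ) :
    coeff j (1 + g)⁻¹ = ∑ k ∈ range (j + 1), (-1) ^ k * coeff j (g ^ k) := by
  have hunit : constantCoeff (1 + g) ≠ 0 := by simp [hg]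
  have hgeom : ∑ k ∈ range (j + 1), (-g) ^ k = (1 + g)⁻¹ - (1 + g)⁻¹ * (-g) ^ (j + 1) := by
    rw [← mul_one_sub, ← mul_neg_geom_sum, sub_neg_eq_add, ← mul_assoc,
      PowerSeries.inv_mul_cancel _ hunit, one_mul]
  have htail : coeff j ((1 + g)⁻¹ * (-g) ^ (j + 1)) = 0 := by
    have hX : X ^ (j + 1) ∣ (1 + g)⁻¹ * (-g) ^ (j + 1) :=
      (pow_dvd_pow_of_dvd (dvd_neg.mpr (X_dvd_iff.mpr hg)) _).mul_left _
    exact X_pow_dvd_iff.mp hX j j.lt_succ_self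
  have hcoeff := congrArg (coeff j) hgeom
  rw [map_sub, htail, sub_zero, map_sum] at hcoeff
  rw [← hcoeff]
  refine sum_congr rfl fun k _ => ?_
  rw [← neg_one_smul K g, smul_pow, map_smul, smul_eq_mul]

lemma factorial_mul_coeff_degExpSeries (lam x : ℝ) (n : ℕ) :
    (n.factorial : ℝ) * coeff n (degExpSeries lam x) = degFallingFactorial lam x n := by
  rw [degExpSeries, coeff_mk, mul_div_cancel₀ _ (by positivity)]

theorem degExpSeries_add (lam x y : ℝ) :
    degExpSeries lam (x + y) = degExpSeries lam x * degExpSeries lam y := by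
  ext n
  refine mul_left_cancel₀ (by positivity : (n.factorial : ℝ) ≠ 0) ?_
  simp only [factorial_mul_coeff_mul, factorial_mul_coeff_degExpSeries, degFallingFactorial_add]

lemma degExpSeries_zero (lam : ℝ) : degExpSeries lam 0 = 1 := by
  ext (_ | n)
  · simp [degExpSeries, degFallingFactorial_zero]
  · simp [degExpSeries, degFallingFactorial_zero_left]

lemma constantCoeff_degExpSeries (lam x : ℝ) : constantCoeff (degExpSeries lam x) = 1 := by
  simp [degExpSeries, degFallingFactorial_zero]

lemma constantCoeff_degExpSubOneDivT (lam : ℝ) : constantCoeff (degExpSubOneDivT lam) = 1 := by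
  simp [degExpSubOneDivT, degFallingFactorial_succ, degFallingFactorial_zero]

lemma X_mul_degExpSubOneDivT (lam : ℝ) :
    X * degExpSubOneDivT lam = degExpSeries lam 1 - 1 := by
  ext (_ | n)
  · simp [constantCoeff_degExpSeries]
  · simp [degExpSubOneDivT, degExpSeries, coeff_one]

lemma inv_degBernoulliSeries (lam x : ℝ) :
    (degBernoulliSeries lam x)⁻¹ = degExpSubOneDivT lam * degExpSeries lam (-x) := by
  have hD : constantCoeff (degExpSubOneDivT lam) ≠ 0 := by
    simp [constantCoeff_degExpSubOneDivT]
  rw [degBernoulliSeries,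
    PowerSeries.inv_eq_iff_mul_eq_one (by simp [hD, constantCoeff_degExpSeries])]
  calc degExpSubOneDivT lam * degExpSeries lam (-x) *
        ((degExpSubOneDivT lam)⁻¹ * degExpSeries lam x)
      = ((degExpSubOneDivT lam)⁻¹ * degExpSubOneDivT lam) *
          (degExpSeries lam (-x) * degExpSeries lam x) := by ring
    _ = 1 := by
      rw [PowerSeries.inv_mul_cancel _ hD, ← degExpSeries_add, neg_add_cancel,
        degExpSeries_zero, one_mul]

lemma X_mul_inv_degBernoulliSeries_mul_degExpSeries_add_one (lam x : ℝ) :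
    X * ((degBernoulliSeries lam x)⁻¹ * degExpSeries lam (x + 1)) =
      degExpSeries lam 2 - degExpSeries lam 1 := by
  rw [inv_degBernoulliSeries]
  calc X * (degExpSubOneDivT lam * degExpSeries lam (-x) * degExpSeries lam (x + 1))
      = (X * degExpSubOneDivT lam) * (degExpSeries lam (-x) * degExpSeries lam (x + 1)) := by
        ring
    _ = degExpSeries lam 2 - degExpSeries lam 1 := by
      rw [X_mul_degExpSubOneDivT, ← degExpSeries_add, neg_add_cancel_left, sub_mul, one_mul,
        ← degExpSeries_add]
      norm_num

theorem dimorphicMersenne_div_eq_sum (lam x : ℝ) (n : ℕ) :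
    dimorphicMersenne lam (n + 1) / (n + 1 : ℝ) =
      ∑ j ∈ range (n + 1), (n.choose j : ℝ) *
        ((j.factorial * coeff j (degBernoulliSeries lam x)⁻¹) *
          degFallingFactorial lam (x + 1) (n - j)) := by
  have hcoeff := congrArg (coeff (n + 1))
    (X_mul_inv_degBernoulliSeries_mul_degExpSeries_add_one lam x)
  rw [coeff_succ_X_mul, map_sub] at hcoeff
  have hsum := factorial_mul_coeff_mul (degBernoulliSeries lam x)⁻¹ (degExpSeries lam (x + 1)) n
  rw [Nat.sum_antidiagonal_eq_sum_range_succ_mk, hcoeff] at hsum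
  simp only [factorial_mul_coeff_degExpSeries] at hsum
  rw [← hsum, dimorphicMersenne, degExpSeries, degExpSeries, coeff_mk, coeff_mk, ← sub_div,
    Nat.factorial_succ]
  push_cast
  field_simp

lemma constantCoeff_degBernoulliSeries (lam x : ℝ) :
    constantCoeff (degBernoulliSeries lam x) = 1 := by
  simp [degBernoulliSeries, constantCoeff_degExpSeries, constantCoeff_degExpSubOneDivT]

theorem factorial_mul_coeff_inv_degBernoulliSeries (lam x : ℝ) {j : ℕ} (hj : 0 < j) :
    (j.factorial : ℝ) * coeff j (degBernoulliSeries lam x)⁻¹ =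
      ∑ k ∈ Icc 1 j, (-1 : ℝ) ^ k * k.factorial *
        incompleteBell j k (fun i => degBernoulli lam x i) := by
  have hg0 : constantCoeff (degBernoulliSeries lam x - 1) = 0 := by
    simp [constantCoeff_degBernoulliSeries]
  have hg (m : ℕ) (hm : 0 < m) : coeff m (degBernoulliSeries lam x - 1) =
      degBernoulli lam x m / m.factorial := by
    rw [map_sub, coeff_one, if_neg hm.ne', sub_zero, degBernoulli,
      mul_div_cancel_left₀ _ (by positivity)]
  rw [← add_sub_cancel (1 : ℝ⟦X⟧) (degBernoulliSeries lam x), coeff_inv_one_add hg0, mul_sum,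
    range_eq_Ico, sum_eq_sum_Ico_succ_bot (by omega)]
  simp only [pow_zero, coeff_one, if_neg hj.ne', mul_zero, zero_add, Ico_add_one_right_eq_Icc]
  refine sum_congr rfl fun k _ => ?_
  rw [mul_left_comm, factorial_mul_coeff_pow_eq_incompleteBell hg0 hg]
  ring

/-- Theorem 3: for `n ≥ 1` and any `x`,
`β_{n,λ}(x) = (x+1)_{n,λ} - M_{n+1,λ}/(n+1)
+ ∑_{k=2}^{n} (-1)^k k! B_{n,k}(β_{1,λ}(x), …, β_{n-k+1,λ}(x))
+ ∑_{j=1}^{n-1} ∑_{k=1}^{j} C(n,j) (x+1)_{n-j,λ} (-1)^k k!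
B_{j,k}(β_{1,λ}(x), …, β_{j-k+1,λ}(x))`. -/
theorem degBernoulli_eq_dimorphicMersenne_sum (lam : ℝ) (n : ℕ) (hn : 1 ≤ n) (x : ℝ) :
    degBernoulli lam x n =
      degFallingFactorial lam (x + 1) n - dimorphicMersenne lam (n + 1) / (n + 1 : ℝ) +
        (∑ k ∈ Finset.Icc 2 n,
          (-1 : ℝ) ^ k * (k.factorial : ℝ) *
            incompleteBell n k (fun i => degBernoulli lam x i)) +
        ∑ j ∈ Finset.Icc 1 (n - 1), ∑ k ∈ Finset.Icc 1 j,
          (n.choose j : ℝ) * degFallingFactorial lam (x + 1) (n - j) *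
            (-1 : ℝ) ^ k * (k.factorial : ℝ) *
              incompleteBell j k (fun i => degBernoulli lam x i) := by
  have hsplit := dimorphicMersenne_div_eq_sum lam x n
  rw [range_eq_Ico, sum_eq_sum_Ico_succ_bot (by omega), sum_Ico_succ_top hn] at hsplit
  have hfirst : (0 : ℕ).factorial * coeff 0 (degBernoulliSeries lam x)⁻¹ = (1 : ℝ) := by
    simp [constantCoeff_degBernoulliSeries]
  have hlast := factorial_mul_coeff_inv_degBernoulliSeries lam x hn
  rw [← insert_Icc_add_one_left_eq_Icc hn, sum_insert (by simp), incompleteBell_one _ hn]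
    at hlast
  have hmiddle : ∑ j ∈ Ico 1 n, (n.choose j : ℝ) *
      ((j.factorial * coeff j (degBernoulliSeries lam x)⁻¹) *
        degFallingFactorial lam (x + 1) (n - j)) =
      ∑ j ∈ Icc 1 (n - 1), ∑ k ∈ Icc 1 j, (n.choose j : ℝ) *
        degFallingFactorial lam (x + 1) (n - j) * (-1 : ℝ) ^ k * k.factorial *
          incompleteBell j k (fun i => degBernoulli lam x i) := by
    rw [← Ico_add_one_right_eq_Icc 1 (n - 1), Nat.sub_add_cancel hn]
    refine sum_congr rfl fun j hj => ?_
    rw [factorial_mul_coeff_inv_degBernoulliSeries lam x (mem_Ico.mp hj).1, sum_mul, mul_sum]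
    refine sum_congr rfl fun k _ => ?_
    ring
  rw [hfirst, hlast, hmiddle, Nat.choose_zero_right, Nat.choose_self, Nat.sub_self,
    degFallingFactorial_zero] at hsplit
  linear_combination hsplit
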